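/- Let ℓ ≥ 2, let j be odd with 1 ≤ j ≤ ℓ, and let w = (w₁, w₂, …, w_{2ℓ}) ∈ 𝔽₄^{2ℓ} with w₂ ≠ 0. If χ_w(O₀) = −1 + 4^{ℓ−1}, then χ_w(Z_{ℓ,j} \ O₀) = 0. -/

import Mathlib

/-- The quadratic form `Q_{ℓ,j}(x₁,…,x_{2ℓ}) = Σ_{i=1}^{j} (α x_{2i-1}² + x_{2i-1}x_{2i} + x_{2i}²)
+ Σ_{i=j+1}^{ℓ} x_{2i-1}x_{2i}`  (coordinates are 0-indexed in Lean). -/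
def Qform {F4 : Type*} [Field F4] (α : F4) (ℓ j : ℕ) (x : Fin (2 * ℓ) → F4) : F4 :=
  ∑ i : Fin ℓ,
    (let a := x ⟨2 * i.val, by have := i.isLt; omega⟩
     let b := x ⟨2 * i.val + 1, by have := i.isLt; omega⟩
     if i.val < j then α * a ^ 2 + a * b + b ^ 2 else a * b)

open scoped Classical in
/-- The value `(-1)^{tr(t)} ∈ ℂ`, where `tr : 𝔽₄ → 𝔽₂`, `tr(t) = t + t²`, is the trace map. -/
noncomputable def chi4 {F4 : Type*} [Field F4] (t : F4) : ℂ :=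
  if t + t ^ 2 = 0 then 1 else -1

/-- The character sum `χ_w(S) = Σ_{v ∈ S} (-1)^{tr(Σ_i w_i v_i)}`. -/
noncomputable def chiSum {F4 : Type*} [Field F4] {m : ℕ} (w : Fin m → F4)
    (S : Set (Fin m → F4)) : ℂ :=
  ∑ᶠ v ∈ S, chi4 (∑ i, w i * v i)

/-!
The conditions `Q(x) = 0` and `x₁ = 0` are detected by orthogonality,
`Σ_t χ(t c) = 4·[c = 0]`. The Gauss sum of `Q` splits over its `ℓ` planes (`j` elliptic,
`ℓ - j` hyperbolic), and completing the square in each plane gives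
`Σ_x χ(t Q(x) + w·x) = -4^ℓ χ(G(w)/t)` for `t ≠ 0`, with an explicit dual form `G` (the sign is
`(-1)^j = -1`). Hence `χ_w({Q = 0}) = 4^{ℓ-1} (1 - 4·[G(w) = 0])`. Replacing `w₁` by `w₁ + s`
changes `G(w)` by `s² + s w₂`, so averaging over `s` computes `χ_w(O₀) = -1 - 4^{ℓ-1}` when
`G(w) = 0`. The hypothesis therefore forces `G(w) ≠ 0`, and then `χ_w(Z) = 4^{ℓ-1} - 1 = χ_w(O₀)`.
-/

open Finset

namespace AddChar

section CommMonoid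

variable {A M : Type*} [AddCommMonoid A] [CommMonoid M]

lemma map_sum_eq_prod (ψ : AddChar A M) {ι : Type*} (s : Finset ι) (f : ι → A) :
    ψ (∑ i ∈ s, f i) = ∏ i ∈ s, ψ (f i) := by
  induction s using Finset.cons_induction with
  | empty => simp
  | cons a s ha ih => rw [sum_cons, prod_cons, map_add_eq_mul, ih]

end CommMonoid

section FiniteField

variable {F : Type*} [Field F] [Fintype F] [DecidableEq F] {ψ : AddChar F ℂ}

lemma sum_dotProduct_eq_zero (hψ : ψ.IsPrimitive) {ι : Type*} [Fintype ι] [DecidableEq ι]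
    {w : ι → F} (hw : w ≠ 0) : ∑ x : ι → F, ψ (w ⬝ᵥ x) = 0 := by
  obtain ⟨k, hk⟩ : ∃ k, w k ≠ 0 := Function.ne_iff.mp hw
  simp only [dotProduct, map_sum_eq_prod]
  rw [← Fintype.prod_sum fun i a ↦ ψ (w i * a)]
  refine prod_eq_zero (mem_univ k) ?_
  simpa [mul_comm, hk] using sum_mulShift (w k) hψ

lemma sum_mul_inv (hψ : ψ.IsPrimitive) (c : F) :
    ∑ t : F, ψ (c * t⁻¹) = if c = 0 then Fintype.card F else 0 := by
  rw [← sum_mulShift c hψ, ← Equiv.sum_comp (Equiv.inv F)]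
  simp [mul_comm]

lemma sum_sum_add_mul_of_eq_zero_iff (hψ : ψ.IsPrimitive) (f L : F → F) {a₀ : F}
    (hL : ∀ a, L a = 0 ↔ a = a₀) :
    ∑ a : F, ∑ b : F, ψ (f a + L a * b) = Fintype.card F * ψ (f a₀) := by
  simp_rw [map_add_eq_mul, ← mul_sum, mul_comm (L _), sum_mulShift _ hψ, hL]
  simp [mul_comm]

lemma sum_hyperbolic (hψ : ψ.IsPrimitive) {t : F} (ht : t ≠ 0) (u v : F) :
    ∑ p : F × F, ψ (t * (p.1 * p.2) + u * p.1 + v * p.2)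
      = Fintype.card F * ψ (-(u * v) * t⁻¹) := by
  have hL (a : F) : t * a + v = 0 ↔ a = -v * t⁻¹ := by
    rw [eq_mul_inv_iff_mul_eq₀ ht, add_eq_zero_iff_eq_neg, mul_comm]
  calc ∑ p : F × F, ψ (t * (p.1 * p.2) + u * p.1 + v * p.2)
      = ∑ a : F, ∑ b : F, ψ (u * a + (t * a + v) * b) := by
        rw [Fintype.sum_prod_type]
        exact Fintype.sum_congr _ _ fun a ↦ Fintype.sum_congr _ _ fun b ↦ by ring_nf
    _ = Fintype.card F * ψ (-(u * v) * t⁻¹) := by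
        rw [sum_sum_add_mul_of_eq_zero_iff hψ (u * ·) _ hL]; ring_nf

end FiniteField

end AddChar

section FieldOfCardFour

variable {F : Type*} [Field F]

@[simp] lemma chi4_zero : chi4 (0 : F) = 1 := by simp [chi4]

variable [Fintype F]

lemma two_eq_zero_of_card_eq_four (hc : Fintype.card F = 4) : (2 : F) = 0 := by
  have h : ((Fintype.card F : ℕ) : F) = 0 := FiniteField.cast_card_eq_zero F
  rw [hc] at h
  exact pow_eq_zero_iff two_ne_zero |>.mp (by linear_combination h)

lemma pow_four_of_card_eq_four (hc : Fintype.card F = 4) (x : F) : x ^ 4 = x := by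
  simpa [hc] using FiniteField.pow_card x

lemma self_add_sq_eq_zero_or_one (hc : Fintype.card F = 4) (x : F) :
    x + x ^ 2 = 0 ∨ x + x ^ 2 = 1 := by
  have h : (x + x ^ 2) * (x + x ^ 2 - 1) = 0 := by
    linear_combination x ^ 3 * two_eq_zero_of_card_eq_four hc + pow_four_of_card_eq_four hc x
  simpa [sub_eq_zero] using h

lemma chi4_add (hc : Fintype.card F = 4) (x y : F) : chi4 (x + y) = chi4 x * chi4 y := by
  have htr : (x + y) + (x + y) ^ 2 = (x + x ^ 2) + (y + y ^ 2) := by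
    linear_combination x * y * two_eq_zero_of_card_eq_four hc
  have h11 : (1 : F) + 1 = 0 := by linear_combination two_eq_zero_of_card_eq_four hc
  unfold chi4
  rcases self_add_sq_eq_zero_or_one hc x with hx | hx <;>
    rcases self_add_sq_eq_zero_or_one hc y with hy | hy <;> simp [htr, hx, hy, h11]

noncomputable def trChar (hc : Fintype.card F = 4) : AddChar F ℂ where
  toFun := chi4
  map_zero_eq_one' := chi4_zero
  map_add_eq_mul' := chi4_add hc

@[simp] lemma trChar_apply (hc : Fintype.card F = 4) (x : F) : trChar hc x = chi4 x := rfl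

lemma chi4_sq (hc : Fintype.card F = 4) (x : F) : chi4 (x ^ 2) = chi4 x := by
  have h : x ^ 2 + (x ^ 2) ^ 2 = x + x ^ 2 := by
    linear_combination pow_four_of_card_eq_four hc x
  unfold chi4; rw [h]

lemma chi4_self_add_sq (hc : Fintype.card F = 4) (x : F) : chi4 (x + x ^ 2) = 1 := by
  rcases self_add_sq_eq_zero_or_one hc x with h | h <;>
    simp [chi4, h, two_eq_zero_of_card_eq_four hc, one_add_one_eq_two]

lemma chi4_eq_neg_one_of_sq_eq_add_one (hc : Fintype.card F = 4) {α : F}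
    (hα : α ^ 2 = α + 1) : chi4 α = -1 := by
  have h : α + α ^ 2 ≠ 0 := fun h ↦ one_ne_zero (α := F) <| by
    linear_combination h - hα - α * two_eq_zero_of_card_eq_four hc
  simp [chi4, h]

lemma trChar_isPrimitive (hc : Fintype.card F = 4) {α : F} (hα : α ^ 2 = α + 1) :
    (trChar hc).IsPrimitive := by
  refine AddChar.IsPrimitive.of_ne_one fun h ↦ ?_
  have : (-1 : ℂ) = 1 := by
    simpa [chi4_eq_neg_one_of_sq_eq_add_one hc hα] using DFunLike.congr_fun h α
  norm_num at this

lemma sum_chi4_mul [DecidableEq F] (hc : Fintype.card F = 4) {α : F} (hα : α ^ 2 = α + 1)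
    (c : F) : ∑ s : F, chi4 (s * c) = if c = 0 then 4 else 0 := by
  simpa [hc] using AddChar.sum_mulShift c (trChar_isPrimitive hc hα)

lemma sum_chi4_elliptic (hc : Fintype.card F = 4) {α : F} (hα : α ^ 2 = α + 1) {t : F}
    (ht : t ≠ 0) (u v : F) :
    ∑ p : F × F, chi4 (t * (α * p.1 ^ 2 + p.1 * p.2 + p.2 ^ 2) + u * p.1 + v * p.2)
      = -4 * chi4 ((u ^ 2 + u * v + α * v ^ 2) * t⁻¹) := by
  classical
  have h2 := two_eq_zero_of_card_eq_four hc
  have ht3 : t ^ 3 = 1 := by simpa [hc] using FiniteField.pow_card_sub_one_eq_one t ht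
  have hts : t * t⁻¹ = 1 := mul_inv_cancel₀ ht
  -- `chi4 (t b²) = chi4 (t² b⁴) = chi4 (t² b)` makes the form linear in `b`
  have hlin (a b : F) : chi4 (t * (α * a ^ 2 + a * b + b ^ 2) + u * a + v * b)
      = chi4 (t * α * a ^ 2 + u * a + (t ^ 2 + t * a + v) * b) := by
    have hsq : chi4 (t * b ^ 2) = chi4 (t ^ 2 * b) := by
      rw [← chi4_sq hc]
      congr 1
      linear_combination t ^ 2 * pow_four_of_card_eq_four hc b
    rw [show t * (α * a ^ 2 + a * b + b ^ 2) + u * a + v * b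
        = (t * α * a ^ 2 + u * a + (t * a + v) * b) + t * b ^ 2 by ring,
      show t * α * a ^ 2 + u * a + (t ^ 2 + t * a + v) * b
        = (t * α * a ^ 2 + u * a + (t * a + v) * b) + t ^ 2 * b by ring,
      chi4_add hc, chi4_add hc _ (t ^ 2 * b), hsq]
  have hL (a : F) : t ^ 2 + t * a + v = 0 ↔ a = t + v * t⁻¹ := by
    constructor <;> intro h
    · linear_combination t⁻¹ * h - (a + t) * hts - (t + t⁻¹ * v) * h2
    · rw [h]; linear_combination v * hts + (t ^ 2 + v) * h2
  have hval : t * α * (t + v * t⁻¹) ^ 2 + u * (t + v * t⁻¹)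
      = α + (u ^ 2 + u * v + α * v ^ 2) * t⁻¹ + (u * t + (u * t) ^ 2) := by
    linear_combination (α + u ^ 2 * t⁻¹) * ht3 + (α * v ^ 2 * t⁻¹ - u ^ 2 * t ^ 2) * hts
      + (α * t ^ 2 * v * t⁻¹ - u ^ 2 * t ^ 2) * h2
  calc ∑ p : F × F, chi4 (t * (α * p.1 ^ 2 + p.1 * p.2 + p.2 ^ 2) + u * p.1 + v * p.2)
      = ∑ a : F, ∑ b : F, trChar hc (t * α * a ^ 2 + u * a + (t ^ 2 + t * a + v) * b) := by
        simp only [Fintype.sum_prod_type, hlin, trChar_apply]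
    _ = 4 * chi4 (t * α * (t + v * t⁻¹) ^ 2 + u * (t + v * t⁻¹)) := by
        rw [AddChar.sum_sum_add_mul_of_eq_zero_iff (trChar_isPrimitive hc hα)
          (fun a ↦ t * α * a ^ 2 + u * a) _ hL, hc, trChar_apply]
        norm_num
    _ = -4 * chi4 ((u ^ 2 + u * v + α * v ^ 2) * t⁻¹) := by
        rw [hval, chi4_add hc, chi4_add hc, chi4_self_add_sq hc,
          chi4_eq_neg_one_of_sq_eq_add_one hc hα]
        ring

end FieldOfCardFour

section Pairs

variable {ℓ : ℕ}

def pairEquiv (ℓ : ℕ) : Fin ℓ × Fin 2 ≃ Fin (2 * ℓ) :=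
  finProdFinEquiv.trans (finCongr (mul_comm ℓ 2))

lemma pairEquiv_zero (i : Fin ℓ) : pairEquiv ℓ (i, 0) = ⟨2 * i.val, by omega⟩ := by
  ext; simp [pairEquiv, mul_comm]

lemma pairEquiv_one (i : Fin ℓ) : pairEquiv ℓ (i, 1) = ⟨2 * i.val + 1, by omega⟩ := by
  ext; simp [pairEquiv, mul_comm, add_comm]

lemma sum_eq_sum_pairs {M : Type*} [AddCommMonoid M] (g : Fin (2 * ℓ) → M) :
    ∑ k, g k
      = ∑ i : Fin ℓ, (g ⟨2 * i.val, by omega⟩ + g ⟨2 * i.val + 1, by omega⟩) := by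
  rw [← (pairEquiv ℓ).sum_comp, Fintype.sum_prod_type]
  simp [Fin.sum_univ_two, pairEquiv_zero, pairEquiv_one]

lemma sum_prod_pairs {F M : Type*} [Fintype F] [DecidableEq F] [CommSemiring M]
    (g : Fin ℓ → F → F → M) :
    ∑ x : Fin (2 * ℓ) → F,
        ∏ i : Fin ℓ, g i (x ⟨2 * i.val, by omega⟩) (x ⟨2 * i.val + 1, by omega⟩)
      = ∏ i : Fin ℓ, ∑ p : F × F, g i p.1 p.2 := by
  let e : (Fin (2 * ℓ) → F) ≃ (Fin ℓ → F × F) :=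
    ((pairEquiv ℓ).arrowCongr (Equiv.refl F)).symm.trans
      ((Equiv.curry _ _ _).trans (Equiv.piCongrRight fun _ ↦ piFinTwoEquiv fun _ ↦ F))
  have he (x : Fin (2 * ℓ) → F) (i : Fin ℓ) :
      e x i = (x ⟨2 * i.val, by omega⟩, x ⟨2 * i.val + 1, by omega⟩) := by
    simp [e, pairEquiv_zero, pairEquiv_one]
  rw [Fintype.prod_sum, ← e.sum_comp]
  simp [he]

end Pairs

section Quadric

variable {F : Type*} [Field F]

@[simp] lemma Qform_zero (α : F) (ℓ j : ℕ) : Qform α ℓ j (0 : Fin (2 * ℓ) → F) = 0 := by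
  simp [Qform]

/-- The blocks are what completing the square leaves of `t • Qform + ⟨w, ·⟩` in an elliptic,
resp. hyperbolic, plane (see `sum_chi4_elliptic`, `AddChar.sum_hyperbolic`). -/
def dualQform (α : F) (ℓ j : ℕ) (w : Fin (2 * ℓ) → F) : F :=
  ∑ i : Fin ℓ,
    (let u := w ⟨2 * i.val, by omega⟩
     let v := w ⟨2 * i.val + 1, by omega⟩
     if i.val < j then u ^ 2 + u * v + α * v ^ 2 else u * v)

lemma prod_ite_val_lt_neg_one {ℓ j : ℕ} (hjl : j ≤ ℓ) :
    ∏ i : Fin ℓ, (if i.val < j then (-1 : ℂ) else 1) = (-1) ^ j := by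
  have hfilter : {i ∈ range ℓ | i < j} = range j := by ext; simp; omega
  rw [Fin.prod_univ_eq_prod_range (fun i ↦ if i < j then (-1 : ℂ) else 1), prod_ite, hfilter]
  simp

variable [Fintype F]

lemma sum_chi4_Qform_add_dotProduct (hc : Fintype.card F = 4) {α : F} (hα : α ^ 2 = α + 1)
    {ℓ j : ℕ} (hjodd : Odd j) (hjl : j ≤ ℓ) {t : F} (ht : t ≠ 0) (w : Fin (2 * ℓ) → F) :
    ∑ x : Fin (2 * ℓ) → F, chi4 (t * Qform α ℓ j x + w ⬝ᵥ x)
      = -4 ^ ℓ * chi4 (dualQform α ℓ j w * t⁻¹) := by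
  classical
  let u : Fin ℓ → F := fun i ↦ w ⟨2 * i.val, by omega⟩
  let v : Fin ℓ → F := fun i ↦ w ⟨2 * i.val + 1, by omega⟩
  let block (i : Fin ℓ) (a b : F) : ℂ :=
    chi4 (t * (if i.val < j then α * a ^ 2 + a * b + b ^ 2 else a * b) + u i * a + v i * b)
  have hsplit (x : Fin (2 * ℓ) → F) : chi4 (t * Qform α ℓ j x + w ⬝ᵥ x)
        = ∏ i : Fin ℓ, block i (x ⟨2 * i.val, by omega⟩) (x ⟨2 * i.val + 1, by omega⟩) := by
    rw [dotProduct, sum_eq_sum_pairs, Qform, mul_sum, ← sum_add_distrib,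
      ← trChar_apply hc, AddChar.map_sum_eq_prod]
    exact prod_congr rfl fun i _ ↦ by simp only [block, u, v, trChar_apply]; ring_nf
  have hblock (i : Fin ℓ) : ∑ p : F × F, block i p.1 p.2
        = (if i.val < j then -1 else 1) * 4 * chi4 ((if i.val < j
            then u i ^ 2 + u i * v i + α * v i ^ 2 else u i * v i) * t⁻¹) := by
    by_cases hij : i.val < j
    · simp only [block, hij, if_true, sum_chi4_elliptic hc hα ht]
      ring
    · have hneg : -(u i * v i) = u i * v i := by
        linear_combination -(u i * v i) * two_eq_zero_of_card_eq_four hc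
      simp only [block, hij, if_false, ← trChar_apply hc,
        AddChar.sum_hyperbolic (trChar_isPrimitive hc hα) ht, hneg, hc]
      norm_num
  simp only [hsplit, sum_prod_pairs, hblock, prod_mul_distrib,
    prod_ite_val_lt_neg_one hjl, hjodd.neg_one_pow, prod_const, card_univ, Fintype.card_fin]
  rw [← trChar_apply hc, dualQform, sum_mul, AddChar.map_sum_eq_prod]
  simp only [trChar_apply]
  ring

lemma dualQform_add_single (hc : Fintype.card F = 4) (α : F) {ℓ j : ℕ} (hℓ : 0 < ℓ)
    (hj : 0 < j) (w : Fin (2 * ℓ) → F) (s : F) :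
    dualQform α ℓ j (w + Pi.single ⟨0, by omega⟩ s)
      = dualQform α ℓ j w + (s ^ 2 + s * w ⟨1, by omega⟩) := by
  rw [dualQform, dualQform,
    ← Fintype.sum_ite_eq' (⟨0, hℓ⟩ : Fin ℓ) fun _ ↦ s ^ 2 + s * w ⟨1, by omega⟩,
    ← sum_add_distrib]
  refine sum_congr rfl fun i _ ↦ ?_
  by_cases hi : i = ⟨0, hℓ⟩
  · subst hi
    simp only [hj, ↓reduceIte, mul_zero, Pi.add_apply, Pi.single_eq_same, zero_add, ne_eq,
      Fin.mk.injEq, one_ne_zero, not_false_eq_true, Pi.single_eq_of_ne, add_zero]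
    linear_combination (w ⟨0, by omega⟩ * s) * two_eq_zero_of_card_eq_four hc
  · have hi' : i.val ≠ 0 := fun h ↦ hi (Fin.ext h)
    simp [Fin.ext_iff, hi, hi']

end Quadric

section CharacterSums

variable {F : Type*} [Field F]

lemma chiSum_zero_singleton {m : ℕ} (w : Fin m → F) : chiSum w {0} = 1 := by
  simp [chiSum]

variable [Fintype F]

lemma chiSum_eq_sum_indicator {m : ℕ} (w : Fin m → F) (S : Set (Fin m → F)) :
    chiSum w S = ∑ x, S.indicator (fun v ↦ chi4 (w ⬝ᵥ v)) x := by
  rw [chiSum, finsum_mem_def, finsum_eq_sum_of_fintype]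
  rfl

lemma chiSum_sdiff {m : ℕ} (w : Fin m → F) {S T : Set (Fin m → F)} (hTS : T ⊆ S) :
    chiSum w (S \ T) = chiSum w S - chiSum w T := by
  rw [eq_sub_iff_add_eq', chiSum, chiSum, chiSum, finsum_mem_add_sdiff hTS S.toFinite]

variable [DecidableEq F]

lemma chiSum_setOf_eq_zero (hc : Fintype.card F = 4) {α : F} (hα : α ^ 2 = α + 1) {m : ℕ}
    (φ : (Fin m → F) → F) (w : Fin m → F) :
    4 * chiSum w {x | φ x = 0} = ∑ t : F, ∑ x, chi4 (t * φ x + w ⬝ᵥ x) := by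
  rw [chiSum_eq_sum_indicator, sum_comm, mul_sum]
  refine sum_congr rfl fun x _ ↦ ?_
  simp only [chi4_add hc, ← sum_mul, sum_chi4_mul hc hα]
  by_cases h : φ x = 0 <;> simp [h]

lemma chiSum_sep_eq_zero (hc : Fintype.card F = 4) {α : F} (hα : α ^ 2 = α + 1) {m : ℕ}
    (S : Set (Fin m → F)) (i : Fin m) (w : Fin m → F) :
    4 * chiSum w {x ∈ S | x i = 0} = ∑ s : F, chiSum (w + Pi.single i s) S := by
  simp only [chiSum_eq_sum_indicator]
  rw [sum_comm, mul_sum]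
  refine sum_congr rfl fun x _ ↦ ?_
  by_cases hS : x ∈ S
  · simp only [Set.indicator_of_mem hS, add_dotProduct, single_dotProduct, chi4_add hc,
      ← mul_sum]
    rw [sum_chi4_mul hc hα]
    by_cases h : x i = 0 <;> simp [hS, h, mul_comm]
  · simp [hS]

end CharacterSums

section QuadricSums

variable {F : Type*} [Field F] [Fintype F] [DecidableEq F]

lemma chiSum_Qform_eq_zero (hc : Fintype.card F = 4) {α : F} (hα : α ^ 2 = α + 1) {ℓ j : ℕ}
    (hjodd : Odd j) (hjl : j ≤ ℓ) {w : Fin (2 * ℓ) → F} (hw : w ≠ 0) :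
    4 * chiSum w {x | Qform α ℓ j x = 0}
      = 4 ^ ℓ * (1 - if dualQform α ℓ j w = 0 then 4 else 0) := by
  have hψ := trChar_isPrimitive hc hα
  have hlin : ∑ x, chi4 (w ⬝ᵥ x) = 0 := AddChar.sum_dotProduct_eq_zero hψ hw
  have hinv : ∑ t ∈ univ.erase 0, chi4 (dualQform α ℓ j w * t⁻¹)
      = (if dualQform α ℓ j w = 0 then 4 else 0) - 1 := by
    have h := AddChar.sum_mul_inv hψ (dualQform α ℓ j w)
    rw [← add_sum_erase _ _ (mem_univ 0)] at h
    simp only [trChar_apply, inv_zero, mul_zero, chi4_zero, hc] at h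
    push_cast at h
    linear_combination h
  rw [chiSum_setOf_eq_zero hc hα, ← add_sum_erase _ _ (mem_univ 0),
    sum_congr rfl fun t ht ↦
      sum_chi4_Qform_add_dotProduct hc hα hjodd hjl (ne_of_mem_erase ht) w,
    ← mul_sum, hinv]
  simp only [zero_mul, zero_add, hlin]
  ring

lemma chiSum_Qform_sep_eq_zero (hc : Fintype.card F = 4) {α : F} (hα : α ^ 2 = α + 1)
    {ℓ j : ℕ} (hjodd : Odd j) (hjl : j ≤ ℓ) (hℓ : 0 < ℓ) {w : Fin (2 * ℓ) → F}
    (hw : w ⟨1, by omega⟩ ≠ 0) (hG : dualQform α ℓ j w = 0) :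
    4 * chiSum w {x ∈ {x | Qform α ℓ j x = 0} | x ⟨0, by omega⟩ = 0} = -4 ^ ℓ := by
  set v := w ⟨1, by omega⟩
  have hroots : univ.filter (fun s : F ↦ s ^ 2 + s * v = 0) = {0, v} := by
    ext s
    simp only [mem_filter, mem_univ, true_and, mem_insert, mem_singleton]
    constructor
    · intro h
      have : s * (s - v) = 0 := by
        linear_combination h - s * v * two_eq_zero_of_card_eq_four hc
      simpa [sub_eq_zero] using this
    · rintro (rfl | rfl)
      · ring
      · linear_combination v ^ 2 * two_eq_zero_of_card_eq_four hc
  have hshift (s : F) : 4 * chiSum (w + Pi.single ⟨0, by omega⟩ s) {x | Qform α ℓ j x = 0}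
      = 4 ^ ℓ * (1 - if s ^ 2 + s * v = 0 then 4 else 0) := by
    have hne : w + Pi.single ⟨0, by omega⟩ s ≠ 0 := fun h ↦ hw <| by
      simpa [Pi.single_apply, Fin.ext_iff] using congr_fun h ⟨1, by omega⟩
    rw [chiSum_Qform_eq_zero hc hα hjodd hjl hne,
      dualQform_add_single hc α hℓ hjodd.pos, hG, zero_add]
  have h16 : (4 : ℂ) * (4 * chiSum w {x ∈ {x | Qform α ℓ j x = 0} | x ⟨0, by omega⟩ = 0})
      = 4 * -4 ^ ℓ := by
    rw [chiSum_sep_eq_zero hc hα, mul_sum, sum_congr rfl fun s _ ↦ hshift s, ← mul_sum,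
      sum_sub_distrib, ← sum_filter, hroots, sum_pair hw.symm]
    simp only [sum_const, card_univ, hc, nsmul_eq_mul, Nat.cast_ofNat, mul_one]
    ring
  exact mul_left_cancel₀ (by norm_num) h16

end QuadricSums

theorem stmt14 (F4 : Type*) [Field F4] [Fintype F4] (hc : Fintype.card F4 = 4)
    (α : F4) (hα : α ^ 2 = α + 1)
    (ℓ j : ℕ) (hℓ : 2 ≤ ℓ) (hjodd : Odd j) (hjl : j ≤ ℓ)
    (Z : Set (Fin (2 * ℓ) → F4)) (hZ : Z = {x | x ≠ 0 ∧ Qform α ℓ j x = 0})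
    (O₀ : Set (Fin (2 * ℓ) → F4)) (hO₀ : O₀ = {x ∈ Z | x ⟨0, by omega⟩ = 0})
    (w : Fin (2 * ℓ) → F4) (hw : w ⟨1, by omega⟩ ≠ 0)
    (hval : chiSum w O₀ = -1 + 4 ^ (ℓ - 1)) :
    chiSum w (Z \ O₀) = 0 := by
  classical
  have hpow : (4 : ℂ) ^ ℓ = 4 * 4 ^ (ℓ - 1) := by rw [← pow_succ']; congr 1; omega
  have hZval : chiSum w Z = chiSum w {x | Qform α ℓ j x = 0} - 1 := by
    rw [← chiSum_zero_singleton w, ← chiSum_sdiff _ (by simp), hZ]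
    congr 1; ext; simp [and_comm]
  have hO₀val : chiSum w O₀
      = chiSum w {x ∈ {x | Qform α ℓ j x = 0} | x ⟨0, by omega⟩ = 0} - 1 := by
    rw [← chiSum_zero_singleton w, ← chiSum_sdiff _ (by simp), hO₀, hZ]
    congr 1; ext
    simp only [ne_eq, Set.mem_ofPred_eq, Set.mem_sdiff, Set.mem_singleton_iff]
    tauto
  have hG : dualQform α ℓ j w ≠ 0 := fun hG ↦ by
    have h := chiSum_Qform_sep_eq_zero hc hα hjodd hjl (by omega) hw hG
    have h8 : (8 : ℂ) * 4 ^ (ℓ - 1) = 0 := by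
      linear_combination h + 4 * hO₀val - 4 * hval - hpow
    simp at h8
  have hS := chiSum_Qform_eq_zero hc hα hjodd hjl (w := w) fun h ↦ hw (by simp [h])
  rw [if_neg hG] at hS
  rw [chiSum_sdiff _ (by rw [hO₀]; exact Set.sep_subset _ _), hZval, hval]
  linear_combination (hS + hpow) / 4
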